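/- Let f : ℝⁿ → ℝ be smooth and suppose there are positive integers w₁,…,wₙ and an integer k ≥ 0 such that f(t^{w₁}y₁,…,t^{wₙ}yₙ) = t^k f(y) for all t ∈ ℝ and y ∈ ℝⁿ. Then f is a polynomial function in y₁,…,yₙ. -/

import Mathlib

open MvPolynomial Finset

private lemma aux_weighted_hom (n : ℕ) (w : Fin n → ℕ) (hw : ∀ i, 0 < w i) :
    ∀ k : ℕ, ∀ f : (Fin n → ℝ) → ℝ, ContDiff ℝ (⊤ : ℕ∞) f →
      (∀ (t : ℝ) (y : Fin n → ℝ), f (fun i => t ^ (w i) * y i) = t ^ k * f y) →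
      ∃ p : MvPolynomial (Fin n) ℝ, ∀ y, f y = MvPolynomial.eval y p := by
  intro k
  induction k using Nat.strong_induction_on with
  | _ k ih =>
  intro f hf hhom
  rcases Nat.eq_zero_or_pos k with hk | hk
  · subst hk
    refine ⟨C (f 0), fun y => ?_⟩
    have h0 := hhom 0 y
    have hz : (fun i => (0:ℝ) ^ (w i) * y i) = (0 : Fin n → ℝ) := by
      funext i
      simp [zero_pow (hw i).ne']
    rw [hz] at h0
    simp at h0
    simp [← h0]
  · -- k > 0
    have hfd : Differentiable ℝ f := hf.differentiable (by simp)
    set g : Fin n → (Fin n → ℝ) → ℝ := fun i y => fderiv ℝ f y (Pi.single i 1) with hg_def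
    have hg : ∀ i, ContDiff ℝ (⊤ : ℕ∞) (g i) :=
      fun i => (hf.fderiv_right (by simp)).clm_apply contDiff_const
    -- the scaling continuous linear map
    set L : ℝ → (Fin n → ℝ) →L[ℝ] (Fin n → ℝ) :=
      fun t => ContinuousLinearMap.pi (fun i => (t ^ (w i)) • ContinuousLinearMap.proj i) with hL_def
    have hL_apply : ∀ (t : ℝ) (y : Fin n → ℝ), L t y = fun i => t ^ (w i) * y i := by
      intro t y; funext i
      simp [hL_def]
    -- key: differentiated homogeneity
    have key : ∀ (t : ℝ) (y : Fin n → ℝ) (i : Fin n),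
        t ^ (w i) * g i (fun j => t ^ (w j) * y j) = t ^ k * g i y := by
      intro t y i
      have h1 : (fun y => f (L t y)) = fun y => t ^ k * f y := by
        funext z
        rw [hL_apply]
        exact hhom t z
      have h2 : fderiv ℝ (fun y => f (L t y)) y = fderiv ℝ (fun y => t ^ k * f y) y := by
        rw [h1]
      have hleft : fderiv ℝ (fun y => f (L t y)) y
          = (fderiv ℝ f (L t y)).comp (L t) := by
        have := fderiv_comp (𝕜 := ℝ) y (hfd (L t y)) (L t).differentiableAt
        rw [(L t).fderiv] at this
        exact this
      have hright : fderiv ℝ (fun y => t ^ k * f y) y = (t ^ k) • fderiv ℝ f y :=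
        fderiv_const_mul (hfd y) _
      rw [hleft, hright] at h2
      have h3 := congrFun (congrArg DFunLike.coe h2) (Pi.single i 1)
      have hsingle : L t (Pi.single i 1) = (t ^ (w i)) • (Pi.single i 1 : Fin n → ℝ) := by
        rw [hL_apply]
        funext j
        by_cases hji : j = i
        · subst hji; simp
        · simp [Pi.single_eq_of_ne hji]
      simp only [ContinuousLinearMap.comp_apply, ContinuousLinearMap.smul_apply] at h3
      rw [hsingle, (fderiv ℝ f (L t y)).map_smul] at h3
      rw [hL_apply] at h3
      simpa [smul_eq_mul, hg_def] using h3
    -- Euler relation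
    have euler : ∀ y : Fin n → ℝ, (k : ℝ) * f y = ∑ i, (w i : ℝ) * y i * g i y := by
      intro y
      -- curve
      have hc : HasDerivAt (fun t : ℝ => (fun i => t ^ (w i) * y i : Fin n → ℝ))
          (fun i => (w i : ℝ) * y i) 1 := by
        rw [hasDerivAt_pi]
        intro i
        have := (hasDerivAt_pow (w i) (1:ℝ)).mul_const (y i)
        simpa using this
      have hcy : (fun i => (1:ℝ) ^ (w i) * y i) = y := by funext i; simp
      have hcomp : HasDerivAt (fun t : ℝ => f (fun i => t ^ (w i) * y i))
          (fderiv ℝ f y (fun i => (w i : ℝ) * y i)) 1 := by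
        have hF : HasFDerivAt f (fderiv ℝ f y) ((fun i => (1:ℝ) ^ (w i) * y i : Fin n → ℝ)) := by
          rw [hcy]; exact (hfd y).hasFDerivAt
        exact hF.comp_hasDerivAt 1 hc
      have hre : HasDerivAt (fun t : ℝ => t ^ k * f y) ((k : ℝ) * f y) 1 := by
        have := (hasDerivAt_pow k (1:ℝ)).mul_const (f y)
        simpa using this
      have heq : (fun t : ℝ => f (fun i => t ^ (w i) * y i)) = fun t => t ^ k * f y := by
        funext t; exact hhom t y
      rw [heq] at hcomp
      have hder : fderiv ℝ f y (fun i => (w i : ℝ) * y i) = (k : ℝ) * f y :=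
        hcomp.unique hre
      rw [← hder]
      have hvec : (fun i => (w i : ℝ) * y i) = ∑ i, Pi.single i ((w i : ℝ) * y i) := by
        rw [Finset.univ_sum_single]
      rw [hvec, map_sum]
      congr 1
      funext i
      have : (Pi.single i ((w i : ℝ) * y i) : Fin n → ℝ)
          = ((w i : ℝ) * y i) • (Pi.single i 1 : Fin n → ℝ) := by
        funext j
        by_cases hji : j = i
        · subst hji; simp
        · simp [Pi.single_eq_of_ne hji]
      rw [this, (fderiv ℝ f y).map_smul]
      simp [hg_def, smul_eq_mul]
    -- each partial derivative is a polynomial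
    have hpoly : ∀ i, ∃ p : MvPolynomial (Fin n) ℝ, ∀ y, g i y = MvPolynomial.eval y p := by
      intro i
      by_cases hwk : w i ≤ k
      · -- g i is homogeneous of weight k - w i
        have hhomg : ∀ (t : ℝ) (y : Fin n → ℝ),
            g i (fun j => t ^ (w j) * y j) = t ^ (k - w i) * g i y := by
          intro t y
          have cont1 : Continuous (fun t : ℝ => g i (fun j => t ^ (w j) * y j)) := by
            apply (hg i).continuous.comp
            fun_prop
          have cont2 : Continuous (fun t : ℝ => t ^ (k - w i) * g i y) := by fun_prop
          have eqon : Set.EqOn (fun t : ℝ => g i (fun j => t ^ (w j) * y j))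
              (fun t : ℝ => t ^ (k - w i) * g i y) ({0}ᶜ : Set ℝ) := by
            intro s hs
            have hs0 : s ≠ 0 := hs
            have h := key s y i
            have hpow : s ^ k = s ^ (w i) * s ^ (k - w i) := by
              rw [← pow_add, Nat.add_sub_cancel' hwk]
            rw [hpow, mul_assoc] at h
            exact mul_left_cancel₀ (pow_ne_zero _ hs0) h
          exact congrFun (Continuous.ext_on (dense_compl_singleton (0:ℝ)) cont1 cont2 eqon) t
        exact ih (k - w i) (Nat.sub_lt hk (hw i)) (g i) (hg i) hhomg
      · -- w i > k : g i = 0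
        push_neg at hwk
        have hzero : ∀ y, g i y = 0 := by
          intro y
          have cont1 : Continuous (fun t : ℝ => t ^ (w i - k) * g i (fun j => t ^ (w j) * y j)) := by
            apply Continuous.mul
            · fun_prop
            · apply (hg i).continuous.comp
              fun_prop
          have cont2 : Continuous (fun _ : ℝ => g i y) := continuous_const
          have eqon : Set.EqOn (fun t : ℝ => t ^ (w i - k) * g i (fun j => t ^ (w j) * y j))
              (fun _ : ℝ => g i y) ({0}ᶜ : Set ℝ) := by
            intro s hs
            have hs0 : s ≠ 0 := hs
            have h := key s y i
            have hpow : s ^ (w i) = s ^ k * s ^ (w i - k) := by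
              rw [← pow_add, Nat.add_sub_cancel' hwk.le]
            rw [hpow, mul_assoc] at h
            have := mul_left_cancel₀ (pow_ne_zero k hs0) h
            exact this
          have h := congrFun (Continuous.ext_on (dense_compl_singleton (0:ℝ)) cont1 cont2 eqon) 0
          rw [← h]
          rw [zero_pow (Nat.sub_ne_zero_of_lt hwk)]
          ring
        exact ⟨0, by simp [hzero]⟩
    choose p hp using hpoly
    refine ⟨C ((k : ℝ)⁻¹) * ∑ i, C ((w i : ℝ)) * X i * p i, fun y => ?_⟩
    have hk0 : (k : ℝ) ≠ 0 := Nat.cast_ne_zero.mpr hk.ne'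
    rw [map_mul, eval_C, map_sum]
    have : ∑ i, MvPolynomial.eval y (C ((w i : ℝ)) * X i * p i)
        = ∑ i, (w i : ℝ) * y i * g i y := by
      apply Finset.sum_congr rfl
      intro i _
      rw [map_mul, map_mul, eval_C, eval_X, ← hp i]
    rw [this, ← euler y]
    field_simp

/-- A smooth function on ℝⁿ that is homogeneous of weight `k` with respect to
positive integer weights `w₁, …, wₙ` (for the scaling action
`h_t(y)ᵢ = t^{wᵢ} yᵢ`, for all real `t`) is a polynomial function. -/
theorem smooth_weighted_homogeneous_is_polynomial
    (n : ℕ) (f : (Fin n → ℝ) → ℝ) (hf : ContDiff ℝ (⊤ : ℕ∞) f)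
    (w : Fin n → ℕ) (hw : ∀ i, 0 < w i) (k : ℕ)
    (hhom : ∀ (t : ℝ) (y : Fin n → ℝ),
      f (fun i => t ^ (w i) * y i) = t ^ k * f y) :
    ∃ p : MvPolynomial (Fin n) ℝ, ∀ y, f y = MvPolynomial.eval y p :=
  aux_weighted_hom n w hw k f hf hhom
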